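/- arXiv:1012.0399 — 7 statements merged into one kernel-verified Lean document; each statement's English description precedes it below -/
import Mathlib

section
/- Suppose z ∈ ℂ \ σ(h₀) and the restriction of v + v r⁰(z) v to the subspace Π H is invertible as an operator on Π H; define Q(z) = v ∘ ((v + v r⁰(z) v)|_{ΠH})⁻¹ ∘ v. Then Q(z) r⁰(z) v = v r⁰(z) Q(z) = v - Q(z). -/
/-!
Write `A = v + v r⁰ v = (1 + v r⁰) v`. Since `A` factors through `v` and `v Π = v`, we have
`A = A Π`, so `B A = Π` on all of `H` and hence `Q + Q r⁰ v = v B A = v Π = v`. Since `v` is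
self-adjoint, its range lies in `(ker v)^⊥ = Π H`, where `B` is a right inverse of `A`; hence
`Q + v r⁰ Q = A B v = v`.
-/

theorem IsSelfAdjoint.apply_mem_orthogonal_ker {𝕜 H : Type*} [RCLike 𝕜] [NormedAddCommGroup H]
    [InnerProductSpace 𝕜 H] [CompleteSpace H] {v : H →L[𝕜] H} (hv : IsSelfAdjoint v) (x : H) :
    v x ∈ (LinearMap.ker (v : H →ₗ[𝕜] H))ᗮ := by
  have h : LinearMap.ker (v : H →ₗ[𝕜] H) = (LinearMap.range (v : H →ₗ[𝕜] H))ᗮ := by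
    rw [v.orthogonal_range, hv.adjoint_eq]
  rw [h]
  exact Submodule.le_orthogonal_orthogonal _ (LinearMap.mem_range_self _ x)

theorem ContinuousLinearMap.apply_starProjection_orthogonal_ker {𝕜 E F : Type*} [RCLike 𝕜]
    [NormedAddCommGroup E] [InnerProductSpace 𝕜 E] [CompleteSpace E] [AddCommGroup F]
    [Module 𝕜 F] [TopologicalSpace F] [T1Space F] (T : E →L[𝕜] F) (x : E) :
    T ((LinearMap.ker (T : E →ₗ[𝕜] F))ᗮ.starProjection x) = T x := by
  have : CompleteSpace (LinearMap.ker (T : E →ₗ[𝕜] F)) := T.isClosed_ker.completeSpace_coe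
  have hker : T ((LinearMap.ker (T : E →ₗ[𝕜] F)).starProjection x) = 0 :=
    (LinearMap.ker (T : E →ₗ[𝕜] F)).starProjection_apply_mem x
  rw [Submodule.starProjection_orthogonal_val, map_sub, hker, sub_zero]

theorem Q_resolvent_identity_general {H : Type*} [NormedAddCommGroup H] [InnerProductSpace ℂ H]
    [CompleteSpace H]
    (v : H →L[ℂ] H) (hv : IsSelfAdjoint v)
    (r0 : H →L[ℂ] H)
    (B : H →L[ℂ] H)
    (hB : ∀ x ∈ (LinearMap.ker (v : H →ₗ[ℂ] H))ᗮ,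
      B ((v + v ∘L r0 ∘L v) x) = x ∧ (v + v ∘L r0 ∘L v) (B x) = x) :
    (v ∘L B ∘L v) ∘L r0 ∘L v = v - v ∘L B ∘L v ∧
    v ∘L r0 ∘L (v ∘L B ∘L v) = v - v ∘L B ∘L v := by
  set A := v + v ∘L r0 ∘L v
  constructor
  · ext x
    set p := (LinearMap.ker (v : H →ₗ[ℂ] H))ᗮ.starProjection x
    have hvp : v p = v x := v.apply_starProjection_orthogonal_ker x
    have hBA : B (A x) = p := by
      have hAp : A p = A x := by simp [A, hvp]
      rw [← hAp]
      exact (hB p (Submodule.starProjection_apply_mem _ x)).1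
    calc v (B (v (r0 (v x)))) = v (B (A x)) - v (B (v x)) := by simp [A]
      _ = v x - v (B (v x)) := by rw [hBA, hvp]
  · ext x
    calc v (r0 (v (B (v x)))) = A (B (v x)) - v (B (v x)) := by simp [A]
      _ = v x - v (B (v x)) := by rw [(hB (v x) (hv.apply_mem_orthogonal_ker x)).2]

/-- The identity `Q(z) r0(z) v = v r0(z) Q(z) = v - Q(z)` for
`Q(z) = v ((v + v r0(z) v)|_{ΠH})⁻¹ v`, where `Π` is the orthogonal projection onto
`(ker v)^⊥` and `r0(z) = (h₀ - z)⁻¹` with `z ∉ σ(h₀)`. -/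
theorem Q_resolvent_identity {H : Type*} [NormedAddCommGroup H] [InnerProductSpace ℂ H]
    [CompleteSpace H]
    (h₀ v : H →L[ℂ] H) (hh₀ : IsSelfAdjoint h₀) (hv : IsSelfAdjoint v)
    (hfr : FiniteDimensional ℂ (LinearMap.range (v : H →ₗ[ℂ] H)))
    (z : ℂ) (hz : z ∉ spectrum ℂ h₀) (r0 : H →L[ℂ] H)
    (hr₀ : (h₀ - z • 1) ∘L r0 = 1 ∧ r0 ∘L (h₀ - z • 1) = 1)
    (B : H →L[ℂ] H)
    (hBmem : ∀ x : H, B x ∈ (LinearMap.ker (v : H →ₗ[ℂ] H))ᗮ)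
    (hB : ∀ x ∈ (LinearMap.ker (v : H →ₗ[ℂ] H))ᗮ,
      B ((v + v ∘L r0 ∘L v) x) = x ∧ (v + v ∘L r0 ∘L v) (B x) = x) :
    (v ∘L B ∘L v) ∘L r0 ∘L v = v - v ∘L B ∘L v ∧
    v ∘L r0 ∘L (v ∘L B ∘L v) = v - v ∘L B ∘L v :=
  Q_resolvent_identity_general v hv r0 B hB
end

section
/- Let z ∈ ℂ \ σ(h₀). Then z is an eigenvalue of h if and only if there exists a nonzero vector ψ ∈ Π H with (v + v r⁰(z) v) ψ = 0. Moreover, the map ψ ↦ -r⁰(z) v ψ is a linear bijection from ker(v + v r⁰(z) v) ∩ Π H onto the eigenspace ker(h - z); in particular every eigenvector f of h for z satisfies Π f ≠ 0 and f = -r⁰(z) v (Π f). -/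
/-!
With `r = (h₀ - z)⁻¹`, the eigenvalue equation `(h₀ + v) f = z f` is equivalent to the
fixed-point equation `f = -r (v f)`. Applying `v` shows that every eigenvector `f` lies in the
kernel of the Birman–Schwinger operator `v + v r v`; conversely, for `ψ` in that kernel,
`-r (v ψ)` is an eigenvector. Both conditions only depend on `v ψ`, so `ψ` may be replaced by its projection onto
`(ker v)ᗮ`, on which `v`, and hence `ψ ↦ -r (v ψ)`, is injective.
-/

open Set Submodule

namespace ContinuousLinearMap

variable {𝕜 E : Type*} [NontriviallyNormedField 𝕜] [NormedAddCommGroup E] [NormedSpace 𝕜 E]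

theorem injective_of_comp_eq_one {A r : E →L[𝕜] E} (hAr : A ∘L r = 1) :
    Function.Injective r :=
  Function.LeftInverse.injective fun x => by simpa using congr($hAr x)

theorem apply_eq_iff_eq_apply_of_comp_eq_one {A r : E →L[𝕜] E} (hAr : A ∘L r = 1)
    (hrA : r ∘L A = 1) {f g : E} : A f = g ↔ f = r g := by
  constructor
  · rintro rfl
    simpa using congr($hrA f).symm
  · rintro rfl
    simpa using congr($hAr g)

theorem add_apply_eq_smul_iff (h₀ v : E →L[𝕜] E) (z : 𝕜) (f : E) :
    (h₀ + v) f = z • f ↔ (h₀ - z • 1) f = -(v f) := by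
  simp only [add_apply, sub_apply, smul_apply, one_apply_eq_self]
  rw [eq_neg_iff_add_eq_zero, sub_add_eq_add_sub, sub_eq_zero]

variable {h₀ v r : E →L[𝕜] E} {z : 𝕜}

theorem add_apply_eq_smul_iff_eq_neg_resolvent
    (hAr : (h₀ - z • 1) ∘L r = 1) (hrA : r ∘L (h₀ - z • 1) = 1) (f : E) :
    (h₀ + v) f = z • f ↔ f = -(r (v f)) := by
  rw [add_apply_eq_smul_iff, apply_eq_iff_eq_apply_of_comp_eq_one hAr hrA, map_neg]

theorem birmanSchwinger_apply_eq_zero_iff (ψ : E) :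
    (v + v ∘L r ∘L v) ψ = 0 ↔ v (r (v ψ)) = -(v ψ) := by
  rw [add_apply, comp_apply, comp_apply, eq_neg_iff_add_eq_zero, add_comm]

theorem birmanSchwinger_apply_eq_zero_of_eigen
    (hAr : (h₀ - z • 1) ∘L r = 1) (hrA : r ∘L (h₀ - z • 1) = 1) {f : E}
    (hf : (h₀ + v) f = z • f) : (v + v ∘L r ∘L v) f = 0 := by
  rw [birmanSchwinger_apply_eq_zero_iff]
  conv_rhs => rw [(add_apply_eq_smul_iff_eq_neg_resolvent hAr hrA f).1 hf]
  rw [map_neg, neg_neg]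

theorem eigen_neg_resolvent_of_birmanSchwinger_apply_eq_zero
    (hAr : (h₀ - z • 1) ∘L r = 1) (hrA : r ∘L (h₀ - z • 1) = 1) {ψ : E}
    (hψ : (v + v ∘L r ∘L v) ψ = 0) : (h₀ + v) (-(r (v ψ))) = z • (-(r (v ψ))) := by
  rw [add_apply_eq_smul_iff_eq_neg_resolvent hAr hrA, map_neg,
    (birmanSchwinger_apply_eq_zero_iff ψ).1 hψ, neg_neg]

end ContinuousLinearMap

section Orthogonal

variable {𝕜 E F : Type*} [RCLike 𝕜] [NormedAddCommGroup E] [InnerProductSpace 𝕜 E]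

theorem LinearMap.injOn_orthogonal_ker [AddCommGroup F] [Module 𝕜 F] (v : E →ₗ[𝕜] F) :
    InjOn v (LinearMap.ker v)ᗮ := by
  intro ψ₁ h₁ ψ₂ h₂ h
  rw [← sub_eq_zero]
  refine (LinearMap.ker v).orthogonal_disjoint.le_bot ⟨?_, sub_mem h₁ h₂⟩
  simp [LinearMap.mem_ker, h]

theorem ContinuousLinearMap.apply_eq_of_sub_mem_orthogonal_orthogonal_ker [CompleteSpace E]
    [NormedAddCommGroup F] [NormedSpace 𝕜 F] (v : E →L[𝕜] F) {x y : E}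
    (h : x - y ∈ (LinearMap.ker (v : E →ₗ[𝕜] F))ᗮᗮ) : v y = v x := by
  have : CompleteSpace (LinearMap.ker (v : E →ₗ[𝕜] F)) := v.isClosed_ker.completeSpace_coe
  rw [orthogonal_orthogonal, LinearMap.mem_ker, map_sub] at h
  exact (sub_eq_zero.1 h).symm

end Orthogonal

open ContinuousLinearMap in
theorem eigenvalue_characterization_general {H : Type*} [NormedAddCommGroup H]
    [InnerProductSpace ℂ H] [CompleteSpace H]
    (h₀ v : H →L[ℂ] H)
    (z : ℂ) (r0 : H →L[ℂ] H)
    (hr0 : (h₀ - z • 1) ∘L r0 = 1 ∧ r0 ∘L (h₀ - z • 1) = 1)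
    (Proj : H →L[ℂ] H)
    (hProj : ∀ x : H, Proj x ∈ (LinearMap.ker (v : H →ₗ[ℂ] H))ᗮ ∧ x - Proj x ∈ ((LinearMap.ker (v : H →ₗ[ℂ] H))ᗮ)ᗮ) :
    ((∃ f : H, f ≠ 0 ∧ (h₀ + v) f = z • f) ↔
      (∃ ψ ∈ (LinearMap.ker (v : H →ₗ[ℂ] H))ᗮ, ψ ≠ 0 ∧ (v + v ∘L r0 ∘L v) ψ = 0)) ∧
    (∀ ψ ∈ (LinearMap.ker (v : H →ₗ[ℂ] H))ᗮ, (v + v ∘L r0 ∘L v) ψ = 0 →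
      (h₀ + v) (-(r0 (v ψ))) = z • (-(r0 (v ψ)))) ∧
    (∀ ψ₁ ∈ (LinearMap.ker (v : H →ₗ[ℂ] H))ᗮ, ∀ ψ₂ ∈ (LinearMap.ker (v : H →ₗ[ℂ] H))ᗮ,
      (v + v ∘L r0 ∘L v) ψ₁ = 0 → (v + v ∘L r0 ∘L v) ψ₂ = 0 →
      -(r0 (v ψ₁)) = -(r0 (v ψ₂)) → ψ₁ = ψ₂) ∧
    (∀ f : H, (h₀ + v) f = z • f →
      ∃ ψ ∈ (LinearMap.ker (v : H →ₗ[ℂ] H))ᗮ, (v + v ∘L r0 ∘L v) ψ = 0 ∧ f = -(r0 (v ψ))) ∧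
    (∀ f : H, f ≠ 0 → (h₀ + v) f = z • f → Proj f ≠ 0 ∧ f = -(r0 (v (Proj f)))) := by
  obtain ⟨hAr, hrA⟩ := hr0
  have hinj : InjOn (fun ψ => -(r0 (v ψ))) (LinearMap.ker (v : H →ₗ[ℂ] H))ᗮ :=
    (neg_injective.comp (injective_of_comp_eq_one hAr)).comp_injOn
      (LinearMap.injOn_orthogonal_ker (v : H →ₗ[ℂ] H))
  have hvProj (f : H) : v (Proj f) = v f :=
    apply_eq_of_sub_mem_orthogonal_orthogonal_ker v (hProj f).2
  have hback (f : H) (hf : (h₀ + v) f = z • f) :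
      (v + v ∘L r0 ∘L v) (Proj f) = 0 ∧ f = -(r0 (v (Proj f))) := by
    rw [birmanSchwinger_apply_eq_zero_iff, hvProj, ← birmanSchwinger_apply_eq_zero_iff]
    exact ⟨birmanSchwinger_apply_eq_zero_of_eigen hAr hrA hf,
      (add_apply_eq_smul_iff_eq_neg_resolvent hAr hrA f).1 hf⟩
  have hProj_ne (f : H) (hf0 : f ≠ 0) (hf : (h₀ + v) f = z • f) : Proj f ≠ 0 := by
    intro hP
    rw [(hback f hf).2, hP, map_zero, map_zero, neg_zero] at hf0
    exact hf0 rfl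
  refine ⟨⟨fun ⟨f, hf0, hf⟩ => ⟨Proj f, (hProj f).1, hProj_ne f hf0 hf, (hback f hf).1⟩,
    fun ⟨ψ, hψ, hψ0, hBS⟩ =>
      ⟨-(r0 (v ψ)), fun h => hψ0 (hinj hψ (zero_mem _) (by simpa using h)),
        eigen_neg_resolvent_of_birmanSchwinger_apply_eq_zero hAr hrA hBS⟩⟩,
    fun ψ _ hBS => eigen_neg_resolvent_of_birmanSchwinger_apply_eq_zero hAr hrA hBS,
    fun ψ₁ h₁ ψ₂ h₂ _ _ h => hinj h₁ h₂ h,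
    fun f hf => ⟨Proj f, (hProj f).1, hback f hf⟩,
    fun f hf0 hf => ⟨hProj_ne f hf0 hf, (hback f hf).2⟩⟩

/-- Characterization of the eigenvalues of `h = h₀ + v` outside `σ(h₀)`:
`z` is an eigenvalue of `h` iff `v + v r⁰(z) v` has a nonzero kernel vector in
`ΠH = (ker v)^⊥`, and `ψ ↦ -r⁰(z) v ψ` is a linear bijection from
`ker(v + v r⁰(z) v) ∩ ΠH` onto `ker(h - z)`; in particular every eigenvector `f`
of `h` for `z` satisfies `Π f ≠ 0` and `f = -r⁰(z) v (Π f)`, where `Π` is the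
orthogonal projection onto `(ker v)^⊥`. -/
theorem eigenvalue_characterization {H : Type*} [NormedAddCommGroup H]
    [InnerProductSpace ℂ H] [CompleteSpace H]
    (h₀ v : H →L[ℂ] H) (hh₀ : IsSelfAdjoint h₀) (hv : IsSelfAdjoint v)
    (hfr : FiniteDimensional ℂ (LinearMap.range (v : H →ₗ[ℂ] H)))
    (z : ℂ) (hz : z ∉ spectrum ℂ h₀) (r0 : H →L[ℂ] H)
    (hr0 : (h₀ - z • 1) ∘L r0 = 1 ∧ r0 ∘L (h₀ - z • 1) = 1)
    (Proj : H →L[ℂ] H)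
    (hProj : ∀ x : H, Proj x ∈ (LinearMap.ker (v : H →ₗ[ℂ] H))ᗮ ∧ x - Proj x ∈ ((LinearMap.ker (v : H →ₗ[ℂ] H))ᗮ)ᗮ) :
    ((∃ f : H, f ≠ 0 ∧ (h₀ + v) f = z • f) ↔
      (∃ ψ ∈ (LinearMap.ker (v : H →ₗ[ℂ] H))ᗮ, ψ ≠ 0 ∧ (v + v ∘L r0 ∘L v) ψ = 0)) ∧
    (∀ ψ ∈ (LinearMap.ker (v : H →ₗ[ℂ] H))ᗮ, (v + v ∘L r0 ∘L v) ψ = 0 →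
      (h₀ + v) (-(r0 (v ψ))) = z • (-(r0 (v ψ)))) ∧
    (∀ ψ₁ ∈ (LinearMap.ker (v : H →ₗ[ℂ] H))ᗮ, ∀ ψ₂ ∈ (LinearMap.ker (v : H →ₗ[ℂ] H))ᗮ,
      (v + v ∘L r0 ∘L v) ψ₁ = 0 → (v + v ∘L r0 ∘L v) ψ₂ = 0 →
      -(r0 (v ψ₁)) = -(r0 (v ψ₂)) → ψ₁ = ψ₂) ∧
    (∀ f : H, (h₀ + v) f = z • f →
      ∃ ψ ∈ (LinearMap.ker (v : H →ₗ[ℂ] H))ᗮ, (v + v ∘L r0 ∘L v) ψ = 0 ∧ f = -(r0 (v ψ))) ∧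
    (∀ f : H, f ≠ 0 → (h₀ + v) f = z • f → Proj f ≠ 0 ∧ f = -(r0 (v (Proj f)))) :=
  eigenvalue_characterization_general h₀ v z r0 hr0 Proj hProj
end

section
/- For every e ∈ (0,4) with e ≠ 2, the boundary value g₊(e; 0,0) = lim_{ε→0⁺} g(e + iε; 0,0) of the diagonal lattice Green's function has strictly positive imaginary part: Im g₊(e; 0,0) > 0. -/
open MeasureTheory Real Complex

/-- The lattice Green's function of the 2D discrete Laplacian:
`g(z; x₁, x₂) = (2π)⁻² ∫_{[-π,π]²} e^{-i(k₁x₁+k₂x₂)} / (ω(k) - z) dk`. -/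
noncomputable def latticeGreen (z : ℂ) (x₁ x₂ : ℤ) : ℂ :=
  ((2 * Real.pi) ^ 2)⁻¹ •
    ∫ k in Set.Icc ((-Real.pi, -Real.pi) : ℝ × ℝ) ((Real.pi, Real.pi) : ℝ × ℝ),
      Complex.exp (-Complex.I * ((k.1 : ℂ) * (x₁ : ℂ) + (k.2 : ℂ) * (x₂ : ℂ))) /
        (((2 - Real.cos k.1 - Real.cos k.2 : ℝ) : ℂ) - z)

/-!
Write `ω(k) = 2 - cos k₁ - cos k₂`. For `ε > 0`, `Im g(e + iε; 0, 0)` is `(2π)⁻²` times the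
integral of the Lorentzian `ε / ((ω - e)² + ε²)`, which is at least `1 / (2ε)` on the
`ε`-neighbourhood of the level curve `ω = e`. When `0 < e < 4`, for every `k₁` in some interval
`[α, β]` the equation `cos k₂ = 2 - e - cos k₁` has a solution `K = arccos (2 - e - cos k₁)`, and
by `1`-Lipschitz continuity of `cos` the segment `[K - ε, K]` lies in that neighbourhood. So the
inner integral over `k₂` is at least `1/2` and `Im g(e + iε; 0, 0) ≥ (2π)⁻² (β - α) / 2`
uniformly in small `ε`, a bound that passes to the limit.
-/

open Filter Topology Set

noncomputable def lorentzian (ε s : ℝ) : ℝ := ε / (s ^ 2 + ε ^ 2)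

lemma lorentzian_nonneg {ε : ℝ} (hε : 0 ≤ ε) (s : ℝ) : 0 ≤ lorentzian ε s := by
  unfold lorentzian; positivity

lemma continuous_lorentzian {ε : ℝ} (hε : 0 < ε) : Continuous (lorentzian ε) :=
  continuous_const.div (by fun_prop) fun s => by positivity

lemma inv_two_mul_le_lorentzian {ε s : ℝ} (hε : 0 < ε) (hs : |s| ≤ ε) :
    (2 * ε)⁻¹ ≤ lorentzian ε s := by
  have hs2 : s ^ 2 ≤ ε ^ 2 := sq_le_sq' (abs_le.1 hs).1 (abs_le.1 hs).2
  rw [lorentzian, inv_eq_one_div, div_le_div_iff₀ (by positivity) (by positivity)]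
  nlinarith

lemma im_inv_sub_mul_I (s ε : ℝ) : ((s : ℂ) - ε * I)⁻¹.im = lorentzian ε s := by
  simp [lorentzian, Complex.inv_im, Complex.normSq_apply, sq]

lemma latticeGreen_origin_im (e : ℝ) {ε : ℝ} (hε : 0 < ε) :
    (latticeGreen ((e : ℂ) + ε * I) 0 0).im = ((2 * π) ^ 2)⁻¹ *
      ∫ k in Icc ((-π, -π) : ℝ × ℝ) (π, π), lorentzian ε (2 - Real.cos k.1 - Real.cos k.2 - e) := by
  have hden (k : ℝ × ℝ) : ((2 - Real.cos k.1 - Real.cos k.2 : ℝ) : ℂ) - ((e : ℂ) + ε * I) =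
      ((2 - Real.cos k.1 - Real.cos k.2 - e : ℝ) : ℂ) - ε * I := by push_cast; ring
  have hne (s : ℝ) : (s : ℂ) - ε * I ≠ 0 := fun h => by
    simpa [hε.ne'] using congrArg Complex.im h
  have hint : Integrable
      (fun k : ℝ × ℝ => (((2 - Real.cos k.1 - Real.cos k.2 - e : ℝ) : ℂ) - ε * I)⁻¹)
      (volume.restrict (Icc ((-π, -π) : ℝ × ℝ) (π, π))) :=
    (Continuous.inv₀ (by fun_prop) fun _ => hne _).continuousOn.integrableOn_compact isCompact_Icc
  simp only [latticeGreen, Int.cast_zero, mul_zero, add_zero, Complex.exp_zero, one_div, hden,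
    Complex.smul_im, smul_eq_mul]
  rw [← RCLike.im_to_complex, ← integral_im hint]
  simp only [RCLike.im_to_complex, im_inv_sub_mul_I]

lemma half_le_integral_lorentzian_sub_cos {a ε : ℝ} (ha : a ∈ Icc (-1) 1) (hε : 0 < ε)
    (hεπ : ε ≤ π) : 1 / 2 ≤ ∫ y in Icc (-π) π, lorentzian ε (a - Real.cos y) := by
  set K := arccos a
  have hcosK : Real.cos K = a := cos_arccos ha.1 ha.2
  have hsub : Icc (K - ε) K ⊆ Icc (-π) π :=
    Icc_subset_Icc (by linarith [arccos_nonneg a]) (arccos_le_pi a)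
  have hint : IntegrableOn (fun y => lorentzian ε (a - Real.cos y)) (Icc (-π) π) :=
    ((continuous_lorentzian hε).comp (by fun_prop)).continuousOn.integrableOn_compact isCompact_Icc
  have hnear : ∀ y ∈ Icc (K - ε) K, (2 * ε)⁻¹ ≤ lorentzian ε (a - Real.cos y) := by
    intro y hy
    refine inv_two_mul_le_lorentzian hε ?_
    calc |a - Real.cos y| = |Real.cos K - Real.cos y| := by rw [hcosK]
      _ ≤ |K - y| := abs_cos_sub_cos_le K y
      _ ≤ ε := abs_le.2 ⟨by linarith [hy.2], by linarith [hy.1]⟩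
  calc 1 / 2 = (2 * ε)⁻¹ * volume.real (Icc (K - ε) K) := by
        rw [volume_real_Icc_of_le (by linarith)]; field_simp; ring
    _ ≤ ∫ y in Icc (K - ε) K, lorentzian ε (a - Real.cos y) :=
        setIntegral_ge_of_const_le_real measurableSet_Icc (by simp) hnear (hint.mono_set hsub)
    _ ≤ ∫ y in Icc (-π) π, lorentzian ε (a - Real.cos y) :=
        setIntegral_mono_set hint (.of_forall fun _ => lorentzian_nonneg hε.le _)
          (.of_forall hsub)

lemma cos_mem_Icc_of_mem_Icc_arccos {l u x : ℝ} (hl : l ∈ Icc (-1) 1) (hu : u ∈ Icc (-1) 1)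
    (hx : x ∈ Icc (arccos u) (arccos l)) : Real.cos x ∈ Icc l u := by
  have hx0π : x ∈ Icc 0 π := ⟨(arccos_nonneg u).trans hx.1, hx.2.trans (arccos_le_pi l)⟩
  have hanti := strictAntiOn_cos.antitoneOn
  constructor
  · simpa [cos_arccos hl.1 hl.2] using
      hanti hx0π ⟨arccos_nonneg l, arccos_le_pi l⟩ hx.2
  · simpa [cos_arccos hu.1 hu.2] using
      hanti ⟨arccos_nonneg u, arccos_le_pi u⟩ hx0π hx.1

lemma exists_Icc_forall_two_sub_sub_cos_mem {e : ℝ} (he : e ∈ Ioo 0 4) :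
    ∃ α β, α < β ∧ Icc α β ⊆ Icc (-π) π ∧ ∀ x ∈ Icc α β, 2 - e - Real.cos x ∈ Icc (-1) 1 := by
  obtain ⟨he0, he4⟩ := he
  set l := max (-1) (1 - e)
  set u := min 1 (3 - e)
  have hl : l ∈ Icc (-1) 1 := ⟨le_max_left _ _, max_le (by norm_num) (by linarith)⟩
  have hu : u ∈ Icc (-1) 1 := ⟨le_min (by norm_num) (by linarith), min_le_left _ _⟩
  have hlu : l < u :=
    max_lt (lt_min (by norm_num) (by linarith)) (lt_min (by linarith) (by linarith))
  refine ⟨arccos u, arccos l, arccos_lt_arccos hl.1 hlu hu.2,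
    Icc_subset_Icc (by linarith [arccos_nonneg u, pi_pos]) (arccos_le_pi l), fun x hx => ?_⟩
  have hcos := cos_mem_Icc_of_mem_Icc_arccos hl hu hx
  have : 1 - e ≤ Real.cos x := (le_max_right _ _).trans hcos.1
  have : Real.cos x ≤ 3 - e := hcos.2.trans (min_le_right _ _)
  constructor <;> linarith

lemma le_integral_lorentzian_omega_sub {e ε α β : ℝ} (hε : 0 < ε) (hεπ : ε ≤ π) (hαβ : α ≤ β)
    (hsub : Icc α β ⊆ Icc (-π) π) (hband : ∀ x ∈ Icc α β, 2 - e - Real.cos x ∈ Icc (-1) 1) :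
    (β - α) / 2 ≤ ∫ k in Icc ((-π, -π) : ℝ × ℝ) (π, π),
      lorentzian ε (2 - Real.cos k.1 - Real.cos k.2 - e) := by
  set F : ℝ × ℝ → ℝ := fun k => lorentzian ε (2 - Real.cos k.1 - Real.cos k.2 - e)
  have hF : ∀ k : ℝ × ℝ, F k = lorentzian ε ((2 - e - Real.cos k.1) - Real.cos k.2) := fun k => by
    simp only [F]; ring_nf
  have hFcont : Continuous F := (continuous_lorentzian hε).comp (by fun_prop)
  have hint : IntegrableOn F (Icc α β ×ˢ Icc (-π) π) :=
    hFcont.continuousOn.integrableOn_compact (isCompact_Icc.prod isCompact_Icc)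
  have hinner : ∀ x ∈ Icc α β, 1 / 2 ≤ ∫ y in Icc (-π) π, F (x, y) := fun x hx => by
    simpa only [hF] using half_le_integral_lorentzian_sub_cos (hband x hx) hε hεπ
  have hint_inner : IntegrableOn (fun x => ∫ y in Icc (-π) π, F (x, y)) (Icc α β) := by
    rw [IntegrableOn, Measure.volume_eq_prod, ← Measure.prod_restrict] at hint
    exact hint.integral_prod_left
  calc (β - α) / 2 = 1 / 2 * volume.real (Icc α β) := by
        rw [volume_real_Icc_of_le hαβ]; ring
    _ ≤ ∫ x in Icc α β, ∫ y in Icc (-π) π, F (x, y) :=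
        setIntegral_ge_of_const_le_real measurableSet_Icc (by simp) hinner hint_inner
    _ = ∫ k in Icc α β ×ˢ Icc (-π) π, F k := by
        rw [Measure.volume_eq_prod, setIntegral_prod F (by rwa [← Measure.volume_eq_prod])]
    _ ≤ ∫ k in Icc ((-π, -π) : ℝ × ℝ) (π, π), F k := by
        rw [Icc_prod_eq]
        exact setIntegral_mono_set
          (hFcont.continuousOn.integrableOn_compact (isCompact_Icc.prod isCompact_Icc))
          (.of_forall fun k => lorentzian_nonneg hε.le _) (.of_forall (prod_mono hsub le_rfl))

open Filter Topology in
theorem latticeGreen_boundary_im_pos_general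
    (e : ℝ) (he : e ∈ Set.Ioo (0 : ℝ) 4) (L : ℂ)
    (hL : Tendsto (fun ε : ℝ => latticeGreen ((e : ℂ) + ε * Complex.I) 0 0)
      (𝓝[>] 0) (𝓝 L)) :
    0 < L.im := by
  obtain ⟨α, β, hαβ, hsub, hband⟩ := exists_Icc_forall_two_sub_sub_cos_mem he
  have hbound : ∀ ε ∈ Ioc 0 π,
      ((2 * π) ^ 2)⁻¹ * ((β - α) / 2) ≤ (latticeGreen ((e : ℂ) + ε * I) 0 0).im := by
    intro ε hε
    rw [latticeGreen_origin_im e hε.1]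
    gcongr
    exact le_integral_lorentzian_omega_sub hε.1 hε.2 hαβ.le hsub hband
  have hlim : ((2 * π) ^ 2)⁻¹ * ((β - α) / 2) ≤ L.im :=
    ge_of_tendsto ((continuous_im.tendsto L).comp hL)
      (eventually_of_mem (Ioc_mem_nhdsGT pi_pos) hbound)
  exact lt_of_lt_of_le (by have := sub_pos.2 hαβ; positivity) hlim

open Filter Topology in
/-- The boundary value `g₊(e;0,0)` of the diagonal lattice Green's function has
strictly positive imaginary part for every `e ∈ (0,4)`, `e ≠ 2`. -/
theorem latticeGreen_boundary_im_pos
    (e : ℝ) (he : e ∈ Set.Ioo (0 : ℝ) 4) (he2 : e ≠ 2) (L : ℂ)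
    (hL : Tendsto (fun ε : ℝ => latticeGreen ((e : ℂ) + ε * Complex.I) 0 0)
      (𝓝[>] 0) (𝓝 L)) :
    0 < L.im :=
  latticeGreen_boundary_im_pos_general e he L hL
end

section
/- For every z ∈ ℂ with Im z > 0 and all integers m, n ≥ 0, the lattice Green's function admits the Bessel-function representation g(z; m, n) = i^{m+n+1} ∫₀^∞ e^{-it(2-z)} J_m(t) J_n(t) dt, where the Bessel function of integer order n is given by J_n(t) = ((-i)^n / (2π)) ∫_{-π}^{π} exp(-i n k + i t cos k) dk; in particular the integral on the right converges absolutely. -/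
open MeasureTheory Real Complex

/-- The Bessel function of integer order `n`, via its integral representation
`J_n(t) = ((-i)^n / (2π)) ∫_{-π}^{π} exp(-i n k + i t cos k) dk`. -/
noncomputable def besselJ (n : ℕ) (t : ℝ) : ℂ :=
  ((-Complex.I) ^ n / (2 * Real.pi)) *
    ∫ k in Set.Icc (-Real.pi) Real.pi,
      Complex.exp (-Complex.I * (n : ℂ) * (k : ℂ) + Complex.I * (t : ℂ) * (Real.cos k : ℂ))

open Set

theorem inv_eq_I_mul_integral_exp {w : ℂ} (hw : w.im < 0) :
    w⁻¹ = I * ∫ t in Ioi (0 : ℝ), exp (-I * t * w) := by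
  have hre : (-I * w).re < 0 := by simpa using hw
  have hw0 : w ≠ 0 := by rintro rfl; simp at hw
  simp_rw [show ∀ t : ℝ, -I * t * w = -I * w * t from fun t => by ring]
  rw [integral_exp_mul_complex_Ioi hre]
  field_simp
  simp

theorem norm_exp_neg_I_mul (t : ℝ) (w : ℂ) : ‖exp (-I * t * w)‖ = Real.exp (t * w.im) := by
  rw [norm_exp]; simp

noncomputable def besselIntegrand (n : ℕ) (t k : ℝ) : ℂ :=
  exp (-I * n * k + I * t * Real.cos k)

theorem norm_besselIntegrand (n : ℕ) (t k : ℝ) : ‖besselIntegrand n t k‖ = 1 := by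
  rw [besselIntegrand, norm_exp]; simp

theorem setIntegral_besselIntegrand (n : ℕ) (t : ℝ) :
    ∫ k in Icc (-π) π, besselIntegrand n t k = 2 * π * I ^ n * besselJ n t := by
  have hIn : I ^ n * (-I) ^ n = 1 := by rw [← mul_pow]; simp
  have h2π : (2 * π : ℂ) ≠ 0 := by simp [pi_ne_zero]
  rw [besselJ, ← mul_assoc, mul_div_assoc', mul_assoc (2 * π : ℂ), hIn, mul_one,
    div_self h2π, one_mul]
  rfl

noncomputable def greenBesselIntegrand (z : ℂ) (m n : ℕ) (k : ℝ × ℝ) (t : ℝ) : ℂ :=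
  exp (-I * t * (2 - z)) * (besselIntegrand m t k.1 * besselIntegrand n t k.2)

theorem greenBesselIntegrand_eq (z : ℂ) (m n : ℕ) (k : ℝ × ℝ) (t : ℝ) :
    greenBesselIntegrand z m n k t = exp (-I * (k.1 * m + k.2 * n)) *
      exp (-I * t * (((2 - Real.cos k.1 - Real.cos k.2 : ℝ) : ℂ) - z)) := by
  simp only [greenBesselIntegrand, besselIntegrand, ← Complex.exp_add]
  congr 1
  push_cast
  ring

theorem norm_greenBesselIntegrand (z : ℂ) (m n : ℕ) (k : ℝ × ℝ) (t : ℝ) :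
    ‖greenBesselIntegrand z m n k t‖ = Real.exp (-z.im * t) := by
  rw [greenBesselIntegrand, norm_mul, norm_mul, norm_besselIntegrand, norm_besselIntegrand,
    norm_exp_neg_I_mul]
  simp [mul_comm]

theorem integrable_greenBesselIntegrand {z : ℂ} (hz : 0 < z.im) (m n : ℕ) {s : Set (ℝ × ℝ)}
    (hs : volume s ≠ ⊤) :
    Integrable (Function.uncurry (greenBesselIntegrand z m n))
      ((volume.restrict s).prod (volume.restrict (Ioi 0))) := by
  refine Integrable.mono' (g := fun p => (1 : ℝ) * Real.exp (-z.im * p.2))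
    ((integrableOn_const (C := (1 : ℝ)) hs).mul_prod (exp_neg_integrableOn_Ioi 0 hz))
    (Continuous.aestronglyMeasurable ?_) (.of_forall fun p => ?_)
  · unfold greenBesselIntegrand besselIntegrand; fun_prop
  · rw [one_mul]
    exact (norm_greenBesselIntegrand z m n p.1 p.2).le

theorem setIntegral_greenBesselIntegrand_square (z : ℂ) (m n : ℕ) (t : ℝ) :
    ∫ k in Icc ((-π, -π) : ℝ × ℝ) (π, π), greenBesselIntegrand z m n k t =
      (2 * π) ^ 2 * I ^ (m + n) * (exp (-I * t * (2 - z)) * besselJ m t * besselJ n t) := by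
  rw [← Icc_prod_Icc, Measure.volume_eq_prod]
  simp only [greenBesselIntegrand]
  rw [integral_const_mul, setIntegral_prod_mul, setIntegral_besselIntegrand,
    setIntegral_besselIntegrand]
  ring

theorem I_mul_integral_greenBesselIntegrand {z : ℂ} (hz : 0 < z.im) (m n : ℕ) (k : ℝ × ℝ) :
    I * ∫ t in Ioi 0, greenBesselIntegrand z m n k t =
      exp (-I * (k.1 * m + k.2 * n)) / (((2 - Real.cos k.1 - Real.cos k.2 : ℝ) : ℂ) - z) := by
  simp_rw [greenBesselIntegrand_eq]
  rw [integral_const_mul, mul_left_comm, ← inv_eq_I_mul_integral_exp (by simpa using hz),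
    div_eq_mul_inv]

/-- Bessel-function representation of the lattice Green's function:
for `Im z > 0` and `m, n ≥ 0`,
`g(z; m, n) = i^(m+n+1) ∫₀^∞ e^{-it(2-z)} J_m(t) J_n(t) dt`,
the integral converging absolutely. -/
theorem latticeGreen_bessel (z : ℂ) (hz : 0 < z.im) (m n : ℕ) :
    IntegrableOn
      (fun t : ℝ => Complex.exp (-Complex.I * (t : ℂ) * (2 - z)) * besselJ m t * besselJ n t)
      (Set.Ioi (0 : ℝ)) ∧
    latticeGreen z (m : ℤ) (n : ℤ) =
      Complex.I ^ (m + n + 1) *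
        ∫ t in Set.Ioi (0 : ℝ),
          Complex.exp (-Complex.I * (t : ℂ) * (2 - z)) * besselJ m t * besselJ n t := by
  have hc : (2 * π : ℂ) ^ 2 * I ^ (m + n) ≠ 0 := by simp [pi_ne_zero]
  have hF := integrable_greenBesselIntegrand hz m n (s := Icc (-π, -π) (π, π)) measure_Icc_lt_top.ne
  have hFiber := hF.integral_prod_right
  simp only [Function.uncurry_apply_pair, setIntegral_greenBesselIntegrand_square] at hFiber
  refine ⟨(integrable_const_mul_iff hc.isUnit _).mp hFiber, ?_⟩
  calc latticeGreen z m n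
      = ((2 * π) ^ 2)⁻¹ •
          ∫ k in Icc (-π, -π) (π, π), I * ∫ t in Ioi 0, greenBesselIntegrand z m n k t := by
        simp [latticeGreen, I_mul_integral_greenBesselIntegrand hz]
    _ = ((2 * π) ^ 2)⁻¹ •
          (I * ∫ t in Ioi 0, ∫ k in Icc (-π, -π) (π, π),
            greenBesselIntegrand z m n k t) := by
        rw [integral_const_mul, integral_integral_swap hF]
    _ = _ := by
        simp_rw [setIntegral_greenBesselIntegrand_square, integral_const_mul, pow_succ]
        generalize (∫ t in Ioi (0 : ℝ), exp (-I * t * (2 - z)) * besselJ m t * besselJ n t) = J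
        rw [Complex.real_smul]
        push_cast
        field_simp
end

section
/- For every e ∈ (0,2) and every θ ∈ ℝ, there exists a unique K > 0 such that |K cos θ| + |K sin θ| < π and cos(K cos θ) + cos(K sin θ) = 2 - e. In other words, each ray from the origin meets the energy shell {k ∈ ℝ² : 2 - cos k₁ - cos k₂ = e} in exactly one point inside the square |k₁| + |k₂| < π. -/
open Real Set

/-!
Along the ray through `(cos θ, sin θ)` both conditions only depend on `a = |cos θ|` and
`b = |sin θ|`: the square condition reads `K (a + b) < π`, and the shell condition reads
`cos (K a) + cos (K b) = 2 - e`. On `[0, π / (a + b)]` both `K a` and `K b` stay in `[0, π]`,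
where `cos` is decreasing, so `K ↦ cos (K a) + cos (K b)` strictly decreases there, from `2`
at `K = 0` to `0` at `K = π / (a + b)` (where `K b = π - K a`). The intermediate value
theorem gives the point, strict monotonicity its uniqueness.
-/

theorem abs_cos_add_abs_sin_pos (θ : ℝ) : 0 < |cos θ| + |sin θ| := by
  by_contra! h
  have hcos : cos θ = 0 := abs_eq_zero.1 (by linarith [abs_nonneg (cos θ), abs_nonneg (sin θ)])
  have hsin : sin θ = 0 := abs_eq_zero.1 (by linarith [abs_nonneg (cos θ), abs_nonneg (sin θ)])
  simpa [hcos, hsin] using sin_sq_add_cos_sq θ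

theorem cos_mul_abs_of_nonneg {K : ℝ} (hK : 0 ≤ K) (c : ℝ) : cos (K * |c|) = cos (K * c) := by
  rw [← cos_abs (K * c), abs_mul, abs_of_nonneg hK]

theorem strictAntiOn_cos_mul_add_cos_mul {a b : ℝ} (ha : 0 ≤ a) (hb : 0 ≤ b) (hab : 0 < a + b) :
    StrictAntiOn (fun K => cos (K * a) + cos (K * b)) (Icc 0 (π / (a + b))) := by
  intro K hK K' hK' hKK'
  have hK'ab : K' * (a + b) ≤ π := (le_div_iff₀ hab).1 hK'.2
  have hK'a : K' * a ≤ π := by nlinarith [hK'.1]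
  have hK'b : K' * b ≤ π := by nlinarith [hK'.1]
  have hle : ∀ c, 0 ≤ c → K' * c ≤ π → cos (K' * c) ≤ cos (K * c) := fun c hc hc' =>
    cos_le_cos_of_nonneg_of_le_pi (mul_nonneg hK.1 hc) hc' (by gcongr)
  have hlt : ∀ c, 0 < c → K' * c ≤ π → cos (K' * c) < cos (K * c) := fun c hc hc' =>
    cos_lt_cos_of_nonneg_of_le_pi (mul_nonneg hK.1 hc.le) hc' (by gcongr)
  rcases ha.lt_or_eq with ha | rfl
  · linarith [hlt a ha hK'a, hle b hb hK'b]
  · simpa using hlt b (by simpa using hab) hK'b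

theorem existsUnique_cos_mul_add_cos_mul_eq {a b y : ℝ} (ha : 0 ≤ a) (hb : 0 ≤ b)
    (hab : 0 < a + b) (hy : y ∈ Ioo 0 2) :
    ∃! K : ℝ, 0 < K ∧ K * (a + b) < π ∧ cos (K * a) + cos (K * b) = y := by
  set f : ℝ → ℝ := fun K => cos (K * a) + cos (K * b)
  set K₀ := π / (a + b)
  have hK₀ : K₀ * (a + b) = π := div_mul_cancel₀ _ hab.ne'
  have hf₀ : f 0 = 2 := by norm_num [f]
  have hfK₀ : f K₀ = 0 := by
    simp only [f]
    rw [show K₀ * b = π - K₀ * a by linarith, cos_pi_sub, add_neg_cancel]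
  have hanti := strictAntiOn_cos_mul_add_cos_mul ha hb hab
  have hmem : y ∈ Icc (f K₀) (f 0) := by
    rw [hf₀, hfK₀]
    exact Ioo_subset_Icc_self hy
  obtain ⟨K, hK, hfK⟩ :=
    intermediate_value_Icc' (div_pos pi_pos hab).le (by fun_prop : ContinuousOn f _) hmem
  have hK0 : 0 < K := hK.1.lt_of_ne (by rintro rfl; linarith [hy.2])
  have hKK₀ : K < K₀ := hK.2.lt_of_ne (by rintro rfl; linarith [hy.1])
  refine ⟨K, ⟨hK0, (lt_div_iff₀ hab).1 hKK₀, hfK⟩, ?_⟩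
  rintro K' ⟨hK'0, hK'π, hfK'⟩
  exact hanti.injOn ⟨hK'0.le, (le_div_iff₀ hab).2 hK'π.le⟩ hK (hfK'.trans hfK.symm)

/-- Each ray from the origin meets the energy shell
`{k ∈ ℝ² : 2 - cos k₁ - cos k₂ = e}` in exactly one point inside the square
`|k₁| + |k₂| < π`, for every energy `e ∈ (0,2)`. -/
theorem energy_shell_ray_unique (e : ℝ) (he : e ∈ Set.Ioo (0 : ℝ) 2) (θ : ℝ) :
    ∃! K : ℝ, 0 < K ∧ |K * Real.cos θ| + |K * Real.sin θ| < Real.pi ∧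
      Real.cos (K * Real.cos θ) + Real.cos (K * Real.sin θ) = 2 - e := by
  have hy : 2 - e ∈ Ioo 0 2 := ⟨by linarith [he.2], by linarith [he.1]⟩
  refine (existsUnique_congr fun K => and_congr_right fun hK => ?_).1
    (existsUnique_cos_mul_add_cos_mul_eq (abs_nonneg _) (abs_nonneg _)
      (abs_cos_add_abs_sin_pos θ) hy)
  rw [abs_mul, abs_mul, abs_of_pos hK, ← mul_add, cos_mul_abs_of_nonneg hK.le,
    cos_mul_abs_of_nonneg hK.le]
end

section
/- For every e ∈ (0,2) and φ ∈ [0, π/2], the phase function Φ(θ) = -K(e,θ) cos(φ - θ) has a stationary point in [0, π/2]: there exists θ_s ∈ [0, π/2] such that the derivative of θ ↦ K(e,θ) cos(φ - θ) vanishes at θ_s. -/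
/-!
The shell equation `2 - cos (k cos θ) - cos (k sin θ) = e` sees `θ` only through `|cos θ|` and
`|sin θ|`, and inside the diamond `|k₁| + |k₂| < π` its left side is strictly increasing in `k`
(its `k`-derivative `|cos θ| sin (k |cos θ|) + |sin θ| sin (k |sin θ|)` is positive). Hence the
radius `K(e, ·)` is unique, even and symmetric under `θ ↦ π - θ`, and by the implicit function
theorem it is differentiable, so `K'(0) = K'(π/2) = 0`. The derivative of
`Φ(θ) = K(e, θ) cos (φ - θ)` is then `K(e, 0) sin φ ≥ 0` at `0` and `-K(e, π/2) cos φ ≤ 0` at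
`π/2`, and Darboux's theorem gives a zero in between.
-/

open Real Filter Topology Set

section ImplicitFunction

variable {𝕜 : Type*} [NontriviallyNormedField 𝕜]
  {E₁ : Type*} [NormedAddCommGroup E₁] [NormedSpace 𝕜 E₁] [CompleteSpace E₁]
  {E₂ : Type*} [NormedAddCommGroup E₂] [NormedSpace 𝕜 E₂] [CompleteSpace E₂]
  {F : Type*} [NormedAddCommGroup F] [NormedSpace 𝕜 F] [CompleteSpace F]

theorem HasStrictFDerivAt.eventuallyEq_implicitFunctionOfProdDomain {f : E₁ × E₂ → F}
    {f'u : E₁ × E₂ →L[𝕜] F} {u : E₁ × E₂} (dfu : HasStrictFDerivAt f f'u u)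
    (if₂u : (f'u ∘L .inr 𝕜 E₁ E₂).IsInvertible) {g : E₁ → E₂} {U : Set (E₁ × E₂)}
    (hU : U ∈ 𝓝 u) (hg : ∀ p ∈ U, f p = f u → g p.1 = p.2) :
    g =ᶠ[𝓝 u.1] dfu.implicitFunctionOfProdDomain if₂u := by
  have hgraph : Tendsto (fun x => (x, dfu.implicitFunctionOfProdDomain if₂u x)) (𝓝 u.1) (𝓝 u) :=
    tendsto_id.prodMk_nhds (dfu.tendsto_implicitFunctionOfProdDomain if₂u)
  filter_upwards [hgraph.eventually_mem hU, dfu.eventually_apply_implicitFunctionOfProdDomain if₂u]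
    with x hxU hx using hg _ hxU hx

end ImplicitFunction

theorem ContinuousLinearMap.isInvertible_of_apply_one_ne_zero {R : Type*} [DivisionRing R]
    [TopologicalSpace R] [ContinuousMul R] {L : R →L[R] R} (h : L 1 ≠ 0) : L.IsInvertible :=
  ⟨ContinuousLinearEquiv.unitsEquivAut R (Units.mk0 _ h), ext_ring (by simp)⟩

theorem deriv_eq_zero_of_forall_sub_eq {f : ℝ → ℝ} {a : ℝ} (hf : ∀ x, f (a - x) = f x) :
    deriv f (a / 2) = 0 := by
  have h := deriv_comp_const_sub f a (a / 2)
  simp only [hf, sub_half a] at h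
  linarith

theorem exists_mem_Icc_deriv_eq_zero {f : ℝ → ℝ} {a b : ℝ} (hab : a ≤ b)
    (hf : ∀ x ∈ Icc a b, DifferentiableAt ℝ f x) (ha : 0 ≤ deriv f a) (hb : deriv f b ≤ 0) :
    ∃ c ∈ Icc a b, deriv f c = 0 :=
  (ordConnected_Icc.image_deriv hf).out (mem_image_of_mem _ (right_mem_Icc.2 hab))
    (mem_image_of_mem _ (left_mem_Icc.2 hab)) ⟨hb, ha⟩

theorem one_le_abs_cos_add_abs_sin (θ : ℝ) : 1 ≤ |cos θ| + |sin θ| := by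
  nlinarith [sin_sq_add_cos_sq θ, sq_abs (cos θ), sq_abs (sin θ), abs_nonneg (cos θ),
    abs_nonneg (sin θ)]

theorem add_mul_sin_mul_pos {a b k : ℝ} (ha : 0 ≤ a) (hb : 0 ≤ b) (hab : 0 < a + b)
    (hk : 0 < k) (hkab : k * (a + b) < π) : 0 < a * sin (k * a) + b * sin (k * b) := by
  have hsin : ∀ c, 0 < c → c ≤ a + b → 0 < sin (k * c) := fun c hc hcab =>
    sin_pos_of_pos_of_lt_pi (by positivity) (by nlinarith)
  rcases ha.eq_or_lt with rfl | ha
  · simpa using mul_pos (by simpa using hab) (hsin b (by simpa using hab) (by simp))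
  · have : 0 ≤ b * sin (k * b) :=
      mul_nonneg hb (sin_nonneg_of_nonneg_of_le_pi (by positivity) (by nlinarith))
    nlinarith [mul_pos ha (hsin a ha (by linarith))]

noncomputable def dispersionPolar (θ k : ℝ) : ℝ := 2 - cos (k * cos θ) - cos (k * sin θ)

/-- Polar coordinates `(θ, k)` of the punctured open diamond `0 < |k₁| + |k₂| < π`. -/
def polarDiamond : Set (ℝ × ℝ) := {p | 0 < p.2 ∧ |p.2 * cos p.1| + |p.2 * sin p.1| < π}

theorem isOpen_polarDiamond : IsOpen polarDiamond :=
  (isOpen_lt continuous_const continuous_snd).inter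
    (isOpen_lt (by fun_prop : Continuous fun p : ℝ × ℝ => |p.2 * cos p.1| + |p.2 * sin p.1|)
      continuous_const)

theorem mem_polarDiamond_iff {θ k : ℝ} :
    (θ, k) ∈ polarDiamond ↔ k ∈ Ioo 0 (π / (|cos θ| + |sin θ|)) := by
  have hpos : 0 < |cos θ| + |sin θ| := one_pos.trans_le (one_le_abs_cos_add_abs_sin θ)
  simp only [polarDiamond, mem_ofPred_eq, mem_Ioo, lt_div_iff₀ hpos, abs_mul]
  exact and_congr_right fun hk => by rw [abs_of_pos hk, mul_add]

theorem cos_mul_abs (k c : ℝ) : cos (k * |c|) = cos (k * c) := by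
  rcases abs_choice c with h | h <;> simp [h, mul_neg, cos_neg]

theorem dispersionPolar_eq (θ k : ℝ) :
    dispersionPolar θ k = 2 - cos (k * |cos θ|) - cos (k * |sin θ|) := by
  simp only [dispersionPolar, cos_mul_abs]

theorem hasDerivAt_dispersionPolar (θ k : ℝ) :
    HasDerivAt (dispersionPolar θ)
      (|cos θ| * sin (k * |cos θ|) + |sin θ| * sin (k * |sin θ|)) k := by
  rw [funext (dispersionPolar_eq θ)]
  exact (((hasDerivAt_mul_const _).cos.const_sub 2).sub (hasDerivAt_mul_const _).cos).congr_deriv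
    (by ring)

theorem deriv_dispersionPolar_pos {θ k : ℝ} (hk : (θ, k) ∈ polarDiamond) :
    0 < deriv (dispersionPolar θ) k := by
  rw [(hasDerivAt_dispersionPolar θ k).deriv]
  have hpos : 0 < |cos θ| + |sin θ| := one_pos.trans_le (one_le_abs_cos_add_abs_sin θ)
  obtain ⟨hk0, hkπ⟩ := mem_polarDiamond_iff.1 hk
  exact add_mul_sin_mul_pos (abs_nonneg _) (abs_nonneg _) hpos hk0 ((lt_div_iff₀ hpos).1 hkπ)

theorem strictMonoOn_dispersionPolar (θ : ℝ) :
    StrictMonoOn (dispersionPolar θ) {k | (θ, k) ∈ polarDiamond} := by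
  have hI : {k | (θ, k) ∈ polarDiamond} = Ioo 0 (π / (|cos θ| + |sin θ|)) :=
    ext fun _ => mem_polarDiamond_iff
  rw [hI]
  refine strictMonoOn_of_deriv_pos (convex_Ioo _ _)
    (fun k _ => (hasDerivAt_dispersionPolar θ k).continuousAt.continuousWithinAt) fun k hk => ?_
  rw [interior_Ioo, ← hI] at hk
  exact deriv_dispersionPolar_pos hk

def IsShellRadius (e : ℝ) (r : ℝ → ℝ) : Prop :=
  ∀ θ, (θ, r θ) ∈ polarDiamond ∧ dispersionPolar θ (r θ) = e

namespace IsShellRadius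

variable {e : ℝ} {r : ℝ → ℝ}

theorem eq_of_mem (hr : IsShellRadius e r) {θ k : ℝ} (hk : (θ, k) ∈ polarDiamond)
    (he : dispersionPolar θ k = e) : r θ = k :=
  (strictMonoOn_dispersionPolar θ).injOn (hr θ).1 hk ((hr θ).2.trans he.symm)

theorem apply_eq_of_abs_eq (hr : IsShellRadius e r) {θ θ' : ℝ} (hc : |cos θ'| = |cos θ|)
    (hs : |sin θ'| = |sin θ|) : r θ' = r θ :=
  hr.eq_of_mem (by rw [mem_polarDiamond_iff, hc, hs, ← mem_polarDiamond_iff]; exact (hr θ).1)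
    (by rw [dispersionPolar_eq, hc, hs, ← dispersionPolar_eq]; exact (hr θ).2)

theorem deriv_zero (hr : IsShellRadius e r) : deriv r 0 = 0 := by
  simpa using deriv_eq_zero_of_forall_sub_eq (a := 0) fun θ =>
    hr.apply_eq_of_abs_eq (by simp) (by simp)

theorem deriv_pi_div_two (hr : IsShellRadius e r) : deriv r (π / 2) = 0 :=
  deriv_eq_zero_of_forall_sub_eq fun θ =>
    hr.apply_eq_of_abs_eq (by simp [cos_pi_sub]) (by simp [sin_pi_sub])

theorem differentiable (hr : IsShellRadius e r) : Differentiable ℝ r := by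
  intro θ
  have hF : ContDiff ℝ 1 (Function.uncurry dispersionPolar) := by
    unfold Function.uncurry dispersionPolar
    fun_prop
  have dfu := hF.contDiffAt.hasStrictFDerivAt (x := (θ, r θ)) one_ne_zero
  have hpartial : (fderiv ℝ (Function.uncurry dispersionPolar) (θ, r θ) ∘L .inr ℝ ℝ ℝ) 1 =
      deriv (dispersionPolar θ) (r θ) :=
    (dfu.hasFDerivAt.comp_hasDerivAt (r θ) ((hasDerivAt_const _ θ).prodMk (hasDerivAt_id _))).unique
      (hasDerivAt_dispersionPolar θ (r θ)).differentiableAt.hasDerivAt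
  have hinv := ContinuousLinearMap.isInvertible_of_apply_one_ne_zero
    (hpartial ▸ (deriv_dispersionPolar_pos (hr θ).1).ne')
  have hr_eq : r =ᶠ[𝓝 θ] dfu.implicitFunctionOfProdDomain hinv :=
    dfu.eventuallyEq_implicitFunctionOfProdDomain hinv (isOpen_polarDiamond.mem_nhds (hr θ).1)
      fun p hp hpe => hr.eq_of_mem hp (hpe.trans (hr θ).2)
  exact ((dfu.hasStrictFDerivAt_implicitFunctionOfProdDomain hinv).congr_of_eventuallyEq
    hr_eq.symm).differentiableAt

end IsShellRadius

/-- The phase `Φ(θ) = -K(e,θ) cos(φ - θ)` has a stationary point `θ_s ∈ [0, π/2]`: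
the derivative of `θ ↦ K(e,θ) cos(φ - θ)` vanishes at `θ_s`. -/
theorem phase_stationary_point_exists
    (K : ℝ → ℝ → ℝ)
    (hK : ∀ e ∈ Set.Ioo (0 : ℝ) 2, ∀ θ : ℝ,
      0 < K e θ ∧ |K e θ * Real.cos θ| + |K e θ * Real.sin θ| < Real.pi ∧
        Real.cos (K e θ * Real.cos θ) + Real.cos (K e θ * Real.sin θ) = 2 - e)
    (e : ℝ) (he : e ∈ Set.Ioo (0 : ℝ) 2) (φ : ℝ) (hφ : φ ∈ Set.Icc 0 (Real.pi / 2)) :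
    ∃ θs ∈ Set.Icc 0 (Real.pi / 2),
      HasDerivAt (fun θ : ℝ => K e θ * Real.cos (φ - θ)) 0 θs := by
  have hr : IsShellRadius e (K e) := fun θ => by
    obtain ⟨hpos, hlt, hshell⟩ := hK e he θ
    exact ⟨⟨hpos, hlt⟩, by rw [dispersionPolar]; linarith⟩
  have hΦ : ∀ θ, HasDerivAt (fun θ => K e θ * cos (φ - θ))
      (deriv (K e) θ * cos (φ - θ) + K e θ * sin (φ - θ)) θ := fun θ =>
    ((hr.differentiable θ).hasDerivAt.mul ((hasDerivAt_id θ).const_sub φ).cos).congr_deriv (by simp)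
  have hleft : 0 ≤ deriv (fun θ => K e θ * cos (φ - θ)) 0 := by
    rw [(hΦ 0).deriv, hr.deriv_zero, sub_zero, zero_mul, zero_add]
    exact mul_nonneg (hr 0).1.1.le
      (sin_nonneg_of_nonneg_of_le_pi hφ.1 (by linarith [hφ.2, pi_pos]))
  have hright : deriv (fun θ => K e θ * cos (φ - θ)) (π / 2) ≤ 0 := by
    rw [(hΦ _).deriv, hr.deriv_pi_div_two, zero_mul, zero_add, sin_sub_pi_div_two]
    exact mul_nonpos_of_nonneg_of_nonpos (hr _).1.1.le
      (neg_nonpos.2 (cos_nonneg_of_mem_Icc ⟨by linarith [hφ.1, pi_pos], hφ.2⟩))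
  obtain ⟨θs, hθs, hzero⟩ := exists_mem_Icc_deriv_eq_zero pi_div_two_pos.le
    (fun θ _ => (hΦ θ).differentiableAt) hleft hright
  exact ⟨θs, hθs, hzero ▸ (hΦ θs).differentiableAt.hasDerivAt⟩
end

section
/- Fix e ∈ (0,2) and φ ∈ [0, π/2]. The function (e,θ) ↦ K(e,θ) is continuously differentiable, and if θ_s ∈ [0, π/2] is a stationary point of θ ↦ K(e,θ) cos(φ - θ) (i.e. the θ-derivative vanishes at θ_s), then, writing K_s = K(e, θ_s), the second derivative of the phase Φ(θ) = -K(e,θ) cos(φ - θ) at θ_s equals (K(e,θ_s) ∂_e K(e,θ_s))² ψ(e,φ), where ψ(e,φ) = cos(K_s cos θ_s) sin(K_s sin θ_s) sin φ + cos(K_s sin θ_s) sin(K_s cos θ_s) cos φ, and moreover ψ(e,φ) > 0. -/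
/-!
The shell is the level set `cos k₁ + cos k₂ = 2 - e`. Inside `|k₁| + |k₂| < π` both `k₁ sin k₁`
and `k₂ sin k₂` are nonnegative and not both zero, so `cos k₁ + cos k₂` is strictly decreasing
along rays; this gives uniqueness of `K` and, by the implicit function theorem, its smoothness.

For the phase, write the shell as the curve `γ(θ) = K(e,θ) (cos θ, sin θ)`, so that
`Φ = -⟨γ, n⟩` with `n = (cos φ, sin φ)`. At a stationary point `γ' ⊥ n`, and since also
`γ' ⊥ ∇ = (sin k₁, sin k₂)`, the gradient is parallel to `n`. Differentiating the level identity
twice gives `⟨∇, γ''⟩ = -⟨Hess γ', γ'⟩`, with `Hess = diag(cos k₁, cos k₂)`. The lengths of `γ'`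
and `∇` are fixed by `γ × γ' = K²` and `∂ₑK ⟨γ, ∇⟩ = K`, which yields the factor `(K ∂ₑK)²`.
Positivity of `ψ` comes from
`(sin k₁ + sin k₂) ψ = (cos φ + sin φ) (cos k₁ + cos k₂) (1 - cos k₁ cos k₂)`.
-/

open Real Topology Filter
open scoped ContDiff

namespace EnergyShell

/-- `cos k₁ + cos k₂ = 2 - E(k)` at the point `k = (r cos θ, r sin θ)`. -/
noncomputable def cosSum (θ r : ℝ) : ℝ := cos (r * cos θ) + cos (r * sin θ)

noncomputable def radialSlope (θ r : ℝ) : ℝ := cos θ * sin (r * cos θ) + sin θ * sin (r * sin θ)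

lemma hasDerivAt_cosSum (θ r : ℝ) : HasDerivAt (cosSum θ) (-radialSlope θ r) r := by
  have h := ((hasDerivAt_mul_const (x := r) (cos θ)).cos).add
    ((hasDerivAt_mul_const (x := r) (sin θ)).cos)
  exact h.congr_deriv (by rw [radialSlope]; ring)

lemma mul_sin_mul_eq_abs (r x : ℝ) : x * sin (r * x) = |x| * sin (r * |x|) := by
  rcases abs_cases x with ⟨h, -⟩ | ⟨h, -⟩ <;> simp [h, sin_neg]

lemma mul_sin_mul_add_mul_sin_mul_pos {r x y : ℝ} (hr : 0 < r) (hx : 0 ≤ x) (hy : 0 ≤ y)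
    (hxy : 0 < x + y) (hπ : r * (x + y) < π) : 0 < x * sin (r * x) + y * sin (r * y) := by
  have hsx : 0 ≤ sin (r * x) := sin_nonneg_of_nonneg_of_le_pi (by positivity) (by nlinarith)
  have hsy : 0 ≤ sin (r * y) := sin_nonneg_of_nonneg_of_le_pi (by positivity) (by nlinarith)
  rcases hx.eq_or_lt with rfl | hx
  · simp only [zero_add] at hxy hπ
    simpa using mul_pos hxy (sin_pos_of_pos_of_lt_pi (by positivity) hπ)
  · have := mul_pos hx (sin_pos_of_pos_of_lt_pi (x := r * x) (by positivity)
      (by nlinarith [mul_nonneg hr.le hy]))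
    nlinarith [mul_nonneg hy hsy]

lemma abs_mul_cos_add_abs_mul_sin {r : ℝ} (hr : 0 < r) (θ : ℝ) :
    |r * cos θ| + |r * sin θ| = r * (|cos θ| + |sin θ|) := by
  rw [abs_mul, abs_mul, abs_of_pos hr]; ring

lemma one_le_abs_cos_add_abs_sin (θ : ℝ) : 1 ≤ |cos θ| + |sin θ| := by
  nlinarith [abs_nonneg (cos θ), abs_nonneg (sin θ), sq_abs (cos θ), sq_abs (sin θ),
    sin_sq_add_cos_sq θ]

lemma radialSlope_pos {θ r : ℝ} (hr : 0 < r) (hπ : |r * cos θ| + |r * sin θ| < π) :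
    0 < radialSlope θ r := by
  rw [radialSlope, mul_sin_mul_eq_abs r (cos θ), mul_sin_mul_eq_abs r (sin θ)]
  rw [abs_mul_cos_add_abs_mul_sin hr] at hπ
  exact mul_sin_mul_add_mul_sin_mul_pos hr (abs_nonneg _) (abs_nonneg _)
    (by linarith [one_le_abs_cos_add_abs_sin θ]) hπ

lemma cosSum_injOn (θ : ℝ) :
    Set.InjOn (cosSum θ) {r | 0 < r ∧ |r * cos θ| + |r * sin θ| < π} := by
  have hM : 0 < |cos θ| + |sin θ| := by linarith [one_le_abs_cos_add_abs_sin θ]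
  have hsub :
      {r | 0 < r ∧ |r * cos θ| + |r * sin θ| < π} ⊆ Set.Ioo 0 (π / (|cos θ| + |sin θ|)) :=
    fun r ⟨hr, hπ⟩ => ⟨hr, by rw [abs_mul_cos_add_abs_mul_sin hr] at hπ; rwa [lt_div_iff₀ hM]⟩
  refine (StrictAntiOn.injOn ?_).mono hsub
  refine strictAntiOn_of_deriv_neg (convex_Ioo _ _) (by unfold cosSum; fun_prop) fun r hr => ?_
  rw [interior_Ioo] at hr
  rw [(hasDerivAt_cosSum θ r).deriv, neg_neg_iff_pos]
  refine radialSlope_pos hr.1 ?_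
  rw [abs_mul_cos_add_abs_mul_sin hr.1]
  have := hr.2; rw [lt_div_iff₀ hM] at this; linarith

lemma sin_mul_eq_of_stationary {gx gy x y x' y' s c : ℝ} (hcross : x * y' - y * x' ≠ 0)
    (hgrad : gx * x' + gy * y' = 0) (hstat : c * x' + s * y' = 0) : gx * s = gy * c := by
  have h : (gx * s - gy * c) * (x * y' - y * x') = 0 := by
    linear_combination (-c * x - s * y) * hgrad + (gx * x + gy * y) * hstat
  linear_combination (mul_eq_zero.1 h).resolve_right hcross

/-- `(x, y)`, `(x', y')`, `(x'', y'')` are position, velocity and acceleration of a curve on a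
level set with gradient `(gx, gy)` and Hessian `diag(hx, hy)`; `(c, s)` is the direction of the
phase and `w` stands for `∂ₑK`. -/
lemma phase_curvature_identity {gx gy hx hy x y x' y' x'' y'' s c u w : ℝ}
    (hsc : s ^ 2 + c ^ 2 = 1) (hu : u ≠ 0) (hpar : gx * s = gy * c)
    (hgrad' : hx * x' ^ 2 + gx * x'' + (hy * y' ^ 2 + gy * y'') = 0)
    (hstat : c * x' + s * y' = 0) (hcross : x * y' - y * x' = u ^ 2)
    (hw : w * (x * gx + y * gy) = u) :
    -(c * x'' + s * y'') = (u * w) ^ 2 * (hx * gy * s + hy * gx * c) := by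
  obtain ⟨μ, rfl, rfl⟩ : ∃ μ, x' = -s * μ ∧ y' = c * μ :=
    ⟨c * y' - s * x', by linear_combination c * hstat - x' * hsc,
      by linear_combination s * hstat - y' * hsc⟩
  obtain ⟨ρ, rfl, rfl⟩ : ∃ ρ, gx = ρ * c ∧ gy = ρ * s :=
    ⟨c * gx + s * gy, by linear_combination s * hpar - gx * hsc,
      by linear_combination -c * hpar - gy * hsc⟩
  have hnorm : x * c + y * s ≠ 0 := fun h => by
    apply pow_ne_zero 2 hu; linear_combination -hcross + μ * h
  have hμ : μ = u * w * ρ := by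
    apply mul_right_cancel₀ hnorm
    linear_combination hcross - u * hw
  subst hμ
  have hρ : ρ ≠ 0 := by rintro rfl; apply hu; linear_combination -hw
  apply mul_left_cancel₀ hρ
  linear_combination -hgrad'

lemma cos_mul_sin_mul_add_cos_mul_sin_mul_pos {x y s c : ℝ} (hx : 0 ≤ x) (hy : 0 ≤ y)
    (hxy : 0 < x + y) (hxyπ : x + y < π) (hcos : 0 < cos x + cos y) (hs : 0 ≤ s) (hc : 0 ≤ c)
    (hsc : s ^ 2 + c ^ 2 = 1) (hpar : sin x * s = sin y * c) :
    0 < cos x * sin y * s + cos y * sin x * c := by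
  have hsx : 0 ≤ sin x := sin_nonneg_of_nonneg_of_le_pi hx (by linarith)
  have hsy : 0 ≤ sin y := sin_nonneg_of_nonneg_of_le_pi hy (by linarith)
  have hsin : 0 < sin x + sin y := by
    have h := sin_pos_of_pos_of_lt_pi hxy hxyπ
    rw [sin_add] at h
    nlinarith [cos_le_one x, cos_le_one y]
  have key : (sin x + sin y) * (cos x * sin y * s + cos y * sin x * c)
      = (c + s) * ((cos x + cos y) * (1 - cos x * cos y)) := by
    linear_combination (cos x * sin y - cos y * sin x) * hpar
      + (c + s) * cos x * sin_sq_add_cos_sq y + (c + s) * cos y * sin_sq_add_cos_sq x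
  have hcs : 0 < c + s := by nlinarith
  have hprod : 0 < 1 - cos x * cos y := by
    nlinarith [sin_sq_add_cos_sq x, sin_sq_add_cos_sq y, sq_nonneg (cos x - cos y),
      sq_nonneg (sin x - sin y), mul_pos hsin hsin]
  refine pos_of_mul_pos_right (key ▸ ?_) hsin.le
  positivity

section PlaneCurve

variable {X Y : ℝ → ℝ} {C : ℝ}

lemma sin_mul_deriv_add_sin_mul_deriv_eq_zero (hX : Differentiable ℝ X)
    (hY : Differentiable ℝ Y) (h : ∀ t, cos (X t) + cos (Y t) = C) (t : ℝ) :
    sin (X t) * deriv X t + sin (Y t) * deriv Y t = 0 := by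
  have hconst : HasDerivAt (fun t => cos (X t) + cos (Y t)) 0 t := by
    rw [funext h]; exact hasDerivAt_const t C
  linear_combination -((hX t).hasDerivAt.cos.add (hY t).hasDerivAt.cos).unique hconst

lemma cos_mul_deriv_sq_add_sin_mul_deriv_deriv_eq_zero (hX : ContDiff ℝ 2 X)
    (hY : ContDiff ℝ 2 Y) (h : ∀ t, cos (X t) + cos (Y t) = C) (t : ℝ) :
    cos (X t) * deriv X t ^ 2 + sin (X t) * deriv (deriv X) t
      + (cos (Y t) * deriv Y t ^ 2 + sin (Y t) * deriv (deriv Y) t) = 0 := by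
  have hX1 := hX.differentiable two_ne_zero
  have hY1 := hY.differentiable two_ne_zero
  have hconst : HasDerivAt (fun t => sin (X t) * deriv X t + sin (Y t) * deriv Y t) 0 t := by
    rw [funext (sin_mul_deriv_add_sin_mul_deriv_eq_zero hX1 hY1 h)]; exact hasDerivAt_const t 0
  linear_combination (((hX1 t).hasDerivAt.sin.mul (hX.differentiable_deriv_two t).hasDerivAt).add
    ((hY1 t).hasDerivAt.sin.mul (hY.differentiable_deriv_two t).hasDerivAt)).unique hconst

lemma deriv_const_mul_add_const_mul (hX : Differentiable ℝ X) (hY : Differentiable ℝ Y)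
    (a b : ℝ) : deriv (fun t => a * X t + b * Y t) = fun t => a * deriv X t + b * deriv Y t :=
  funext fun t => (((hX t).hasDerivAt.const_mul a).add ((hY t).hasDerivAt.const_mul b)).deriv

lemma polar_cross_deriv {r : ℝ → ℝ} {θ : ℝ} (hr : DifferentiableAt ℝ r θ) :
    r θ * cos θ * deriv (fun t => r t * sin t) θ - r θ * sin θ * deriv (fun t => r t * cos t) θ
      = r θ ^ 2 := by
  have hsin : HasDerivAt (fun t => r t * sin t) _ θ := hr.hasDerivAt.mul (hasDerivAt_sin θ)
  have hcos : HasDerivAt (fun t => r t * cos t) _ θ := hr.hasDerivAt.mul (hasDerivAt_cos θ)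
  rw [hsin.deriv, hcos.deriv]
  linear_combination r θ ^ 2 * sin_sq_add_cos_sq θ

end PlaneCurve

lemma isInvertible_fderiv_comp_inr_of_hasDerivAt {E : Type*} [NormedAddCommGroup E]
    [NormedSpace ℝ E] {f : E × ℝ → ℝ} {x : E} {r a : ℝ} (hf : DifferentiableAt ℝ f (x, r))
    (ha : HasDerivAt (fun r => f (x, r)) a r) (ha0 : a ≠ 0) :
    (fderiv ℝ f (x, r) ∘L .inr ℝ E ℝ).IsInvertible := by
  have h := hf.hasFDerivAt.comp r (hasFDerivAt_prodMk_right x r)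
  rw [h.unique (ha.hasFDerivAt_equiv ha0)]
  exact ContinuousLinearMap.isInvertible_equiv

/-- `K e θ` is the radius of the energy shell `2 - cos k₁ - cos k₂ = e` in direction `θ`. -/
def IsShellRadius (K : ℝ → ℝ → ℝ) : Prop :=
  ∀ e ∈ Set.Ioo (0 : ℝ) 2, ∀ θ : ℝ,
    0 < K e θ ∧ |K e θ * cos θ| + |K e θ * sin θ| < π ∧ cosSum θ (K e θ) = 2 - e

variable {K : ℝ → ℝ → ℝ}

theorem IsShellRadius.contDiffAt (hK : IsShellRadius K) {e : ℝ} (he : e ∈ Set.Ioo (0 : ℝ) 2)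
    (θ : ℝ) : ContDiffAt ℝ ω (fun p : ℝ × ℝ => K p.1 p.2) (e, θ) := by
  obtain ⟨hr, hπ, hshell⟩ := hK e he θ
  have hω : (ω : ℕ∞ω) ≠ 0 := by simp
  set f : (ℝ × ℝ) × ℝ → ℝ := fun q => q.1.1 + cosSum q.1.2 q.2
  have hf : ContDiffAt ℝ ω f ((e, θ), K e θ) := by unfold f cosSum; fun_prop
  have hinv := isInvertible_fderiv_comp_inr_of_hasDerivAt (hf.differentiableAt hω)
    ((hasDerivAt_cosSum θ (K e θ)).const_add e) (neg_ne_zero.2 (radialSlope_pos hr hπ).ne')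
  set ψ := hf.implicitFunction hω hinv
  have hψ : ContinuousAt ψ (e, θ) := (hf.contDiffAt_implicitFunction hω hinv).continuousAt
  have hψ₀ : ψ (e, θ) = K e θ := hf.implicitFunction_apply_self hω hinv
  have hpos : ∀ᶠ p in 𝓝 (e, θ), 0 < ψ p := hψ.eventually (eventually_gt_nhds (hψ₀ ▸ hr))
  have hbound : ∀ᶠ p in 𝓝 (e, θ), |ψ p * cos p.2| + |ψ p * sin p.2| < π := by
    have : ContinuousAt (fun p : ℝ × ℝ => |ψ p * cos p.2| + |ψ p * sin p.2|) (e, θ) := by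
      fun_prop
    exact this.eventually (eventually_lt_nhds (by simpa [hψ₀] using hπ))
  have hmem : ∀ᶠ p : ℝ × ℝ in 𝓝 (e, θ), p.1 ∈ Set.Ioo (0 : ℝ) 2 :=
    continuousAt_fst.eventually (isOpen_Ioo.mem_nhds he)
  have hsol := hf.eventually_apply_implicitFunction hω hinv
  refine (hf.contDiffAt_implicitFunction hω hinv).congr_of_eventuallyEq ?_
  filter_upwards [hpos, hbound, hmem, hsol] with p hp hpπ hpmem hpsol
  obtain ⟨hKp, hKpπ, hKshell⟩ := hK p.1 hpmem p.2
  refine cosSum_injOn p.2 ⟨hKp, hKpπ⟩ ⟨hp, hpπ⟩ ?_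
  simp only [f, hshell] at hpsol
  linarith

theorem IsShellRadius.contDiff_angle (hK : IsShellRadius K) {e : ℝ}
    (he : e ∈ Set.Ioo (0 : ℝ) 2) : ContDiff ℝ ω (fun θ => K e θ) :=
  contDiff_iff_contDiffAt.2 fun θ => (hK.contDiffAt he θ).comp θ (by fun_prop)

theorem IsShellRadius.deriv_mul_radialSlope (hK : IsShellRadius K) {e : ℝ}
    (he : e ∈ Set.Ioo (0 : ℝ) 2) (θ : ℝ) :
    deriv (fun e' => K e' θ) e * radialSlope θ (K e θ) = 1 := by
  have hv : ContDiffAt ℝ ω (fun e' => K e' θ) e :=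
    (hK.contDiffAt he θ).comp (f := fun e' => (e', θ)) e (by fun_prop)
  have hev : (fun e' => 2 - e') =ᶠ[𝓝 e] fun e' => cosSum θ (K e' θ) := by
    filter_upwards [isOpen_Ioo.mem_nhds he] with e' he' using (hK e' he' θ).2.2.symm
  have h := ((hasDerivAt_cosSum θ (K e θ)).comp e
    (hv.differentiableAt (by simp)).hasDerivAt).congr_of_eventuallyEq hev
  linear_combination -(h.unique ((hasDerivAt_id e).const_sub 2))

theorem IsShellRadius.psi_pos (hK : IsShellRadius K) {e θ φ : ℝ} (he : e ∈ Set.Ioo (0 : ℝ) 2)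
    (hθ : θ ∈ Set.Icc 0 (π / 2)) (hφ : φ ∈ Set.Icc 0 (π / 2))
    (hpar : sin (K e θ * cos θ) * sin φ = sin (K e θ * sin θ) * cos φ) :
    0 < cos (K e θ * cos θ) * sin (K e θ * sin θ) * sin φ
      + cos (K e θ * sin θ) * sin (K e θ * cos θ) * cos φ := by
  obtain ⟨hr, hπ, hlevel⟩ := hK e he θ
  have hcos : 0 ≤ cos θ := cos_nonneg_of_mem_Icc ⟨by linarith [hθ.1, pi_pos], hθ.2⟩
  have hsin : 0 ≤ sin θ := sin_nonneg_of_nonneg_of_le_pi hθ.1 (by linarith [hθ.2, pi_pos])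
  have hx : 0 ≤ K e θ * cos θ := mul_nonneg hr.le hcos
  have hy : 0 ≤ K e θ * sin θ := mul_nonneg hr.le hsin
  rw [abs_of_nonneg hx, abs_of_nonneg hy] at hπ
  refine cos_mul_sin_mul_add_cos_mul_sin_mul_pos hx hy ?_ hπ
    (by unfold cosSum at hlevel; linarith [he.2])
    (sin_nonneg_of_nonneg_of_le_pi hφ.1 (by linarith [hφ.2, pi_pos]))
    (cos_nonneg_of_mem_Icc ⟨by linarith [hφ.1, pi_pos], hφ.2⟩) (sin_sq_add_cos_sq φ) hpar
  nlinarith [sin_sq_add_cos_sq θ, mul_nonneg hcos hsin]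

end EnergyShell

open EnergyShell in
/-- `K` is continuously differentiable on `(0,2) × ℝ`, and at a stationary point
`θ_s` of `θ ↦ K(e,θ) cos(φ - θ)` the second derivative of the phase
`Φ(θ) = -K(e,θ) cos(φ - θ)` equals `(K ∂_e K)² ψ(e,φ)` with `ψ(e,φ) > 0`. -/
theorem phase_second_derivative
    (K : ℝ → ℝ → ℝ)
    (hK : ∀ e ∈ Set.Ioo (0 : ℝ) 2, ∀ θ : ℝ,
      0 < K e θ ∧ |K e θ * Real.cos θ| + |K e θ * Real.sin θ| < Real.pi ∧
        Real.cos (K e θ * Real.cos θ) + Real.cos (K e θ * Real.sin θ) = 2 - e)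
    (e : ℝ) (he : e ∈ Set.Ioo (0 : ℝ) 2) (φ : ℝ) (hφ : φ ∈ Set.Icc 0 (Real.pi / 2)) :
    ContDiffOn ℝ 1 (fun p : ℝ × ℝ => K p.1 p.2) (Set.Ioo (0 : ℝ) 2 ×ˢ Set.univ) ∧
    ∀ θs ∈ Set.Icc 0 (Real.pi / 2),
      deriv (fun θ : ℝ => K e θ * Real.cos (φ - θ)) θs = 0 →
      (iteratedDeriv 2 (fun θ : ℝ => -(K e θ * Real.cos (φ - θ))) θs =
          (K e θs * deriv (fun e' : ℝ => K e' θs) e) ^ 2 *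
            (Real.cos (K e θs * Real.cos θs) * Real.sin (K e θs * Real.sin θs) * Real.sin φ +
              Real.cos (K e θs * Real.sin θs) * Real.sin (K e θs * Real.cos θs) * Real.cos φ) ∧
        0 < Real.cos (K e θs * Real.cos θs) * Real.sin (K e θs * Real.sin θs) * Real.sin φ +
              Real.cos (K e θs * Real.sin θs) * Real.sin (K e θs * Real.cos θs) * Real.cos φ) := by
  have hK' : IsShellRadius K := hK
  refine ⟨fun p hp => ((hK'.contDiffAt hp.1 p.2).of_le le_top).contDiffWithinAt, ?_⟩
  intro θs hθs hstat
  have hr := (hK e he θs).1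
  have hu : ContDiff ℝ 2 (fun θ => K e θ) := (hK'.contDiff_angle he).of_le le_top
  set X := fun θ => K e θ * cos θ
  set Y := fun θ => K e θ * sin θ
  have hX : ContDiff ℝ 2 X := hu.mul contDiff_cos
  have hY : ContDiff ℝ 2 Y := hu.mul contDiff_sin
  have hX1 := hX.differentiable two_ne_zero
  have hY1 := hY.differentiable two_ne_zero
  have hshell : ∀ θ, cos (X θ) + cos (Y θ) = 2 - e := fun θ => (hK e he θ).2.2
  have hphase : (fun θ => K e θ * cos (φ - θ)) = fun θ => cos φ * X θ + sin φ * Y θ := by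
    funext θ; simp only [X, Y, cos_sub]; ring
  have hderiv := deriv_const_mul_add_const_mul hX1 hY1 (cos φ) (sin φ)
  rw [hphase, hderiv] at hstat
  have hcross := polar_cross_deriv (hu.differentiable two_ne_zero θs)
  have hpar := sin_mul_eq_of_stationary (hcross ▸ (pow_pos hr 2).ne')
    (sin_mul_deriv_add_sin_mul_deriv_eq_zero hX1 hY1 hshell θs) hstat
  refine ⟨?_, ?_⟩
  · rw [iteratedDeriv_fun_neg, iteratedDeriv_succ', iteratedDeriv_one, hphase, hderiv,
      deriv_const_mul_add_const_mul hX.differentiable_deriv_two hY.differentiable_deriv_two]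
    refine phase_curvature_identity (sin_sq_add_cos_sq φ) hr.ne' hpar
      (cos_mul_deriv_sq_add_sin_mul_deriv_deriv_eq_zero hX hY hshell θs) hstat hcross ?_
    have := hK'.deriv_mul_radialSlope he θs
    simp only [radialSlope] at this
    linear_combination K e θs * this
  · exact hK'.psi_pos he hθs hφ hpar
end
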